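/- Let V be a finite-dimensional real vector space and B a nondegenerate symmetric bilinear form on V. Let f : V → V be a linear map which is an isometry of B, i.e. B(f x, f y) = B(x, y) for all x, y ∈ V, and suppose there exists a nonzero linear functional φ : V → ℝ such that f x = x for every x in the kernel of φ. Then either f is the identity, or there exists a vector e ∈ V with B(e, e) ≠ 0 such that f x = x − (2·B(e, x)/B(e, e))·e for all x ∈ V. (This is the linear-algebra fact underlying Corollary 5.9: an isometry fixing a hyperplane pointwise is the identity or a reflection in an anisotropic vector.) -/

import Mathlib

/-!
If `f` fixes the hyperplane `ker φ` pointwise and `φ v = 1`, then `f x = x + φ x • w` with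
`w = f v - v`. When `f` is an isometry, the functional `B w` vanishes on `ker φ`, so it is a
multiple `c • φ` with `c = B w v`, and `c ≠ 0` by nondegeneracy unless `w = 0`. Comparing
`B (f v) (f v)` with `B v v` gives `c * (2 + φ w) = 0`, hence `φ w = -2` and `B w w = -2c ≠ 0`;
then `φ x = -2 * B w x / B w w`, which is the reflection formula.
-/

namespace LinearMap

section Hyperplane

variable {R M N : Type*} [CommRing R] [AddCommGroup M] [Module R M] [AddCommGroup N] [Module R N]
  {φ : M →ₗ[R] R} {v : M}

theorem apply_eq_smul_of_ker_le_ker {g : M →ₗ[R] N} (h : ker φ ≤ ker g) (hv : φ v = 1)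
    (x : M) : g x = φ x • g v := by
  have : x - φ x • v ∈ ker g := h (by simp [hv])
  simpa [sub_eq_zero] using this

theorem apply_eq_add_smul_of_fixes_ker {f : M →ₗ[R] M} (hfix : ∀ x, φ x = 0 → f x = x)
    (hv : φ v = 1) (x : M) : f x = x + φ x • (f v - v) := by
  have hker : ker φ ≤ ker (f - id) := fun y hy ↦ by simpa [sub_eq_zero] using hfix y hy
  have := apply_eq_smul_of_ker_le_ker hker hv x
  simp only [sub_apply, id_apply] at this
  rw [← this, add_sub_cancel]

end Hyperplane

namespace BilinForm

section CommRing

variable {R V : Type*} [CommRing R] [AddCommGroup V] [Module R V] {B : LinearMap.BilinForm R V}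
  {f : V →ₗ[R] V} {φ : V →ₗ[R] R} {v w : V}

theorem apply_eq_mul_of_isometry_of_eq_add_smul (hf : ∀ x y, B (f x) (f y) = B x y)
    (hfw : ∀ x, f x = x + φ x • w) (hv : φ v = 1) (x : V) : B w x = φ x * B w v := by
  have hker : ker φ ≤ ker (B w) := fun y (hy : φ y = 0) ↦ by
    have := hf v y
    rw [hfw, hfw, hy, hv, zero_smul, add_zero, one_smul, map_add, LinearMap.add_apply] at this
    simpa using this
  exact apply_eq_smul_of_ker_le_ker hker hv x

theorem mul_two_add_eq_zero_of_isometry_of_eq_add_smul (hB : B.IsSymm)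
    (hf : ∀ x y, B (f x) (f y) = B x y) (hfw : ∀ x, f x = x + φ x • w) (hv : φ v = 1) :
    B w v * (2 + φ w) = 0 := by
  have hvv := hf v v
  have hww := apply_eq_mul_of_isometry_of_eq_add_smul hf hfw hv w
  rw [hfw, hv, one_smul] at hvv
  simp only [map_add, LinearMap.add_apply, hB.eq v w] at hvv
  linear_combination hvv - hww

end CommRing

variable {K V : Type*} [Field K] [AddCommGroup V] [Module K V] {B : LinearMap.BilinForm K V}
  {f : V →ₗ[K] V} {φ : V →ₗ[K] K} {v w : V}

theorem eq_reflection_of_isometry_of_eq_add_smul [NeZero (2 : K)] (hB : B.IsSymm)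
    (hnd : B.SeparatingLeft) (hf : ∀ x y, B (f x) (f y) = B x y)
    (hfw : ∀ x, f x = x + φ x • w) (hv : φ v = 1) (hw : w ≠ 0) :
    B w w ≠ 0 ∧ ∀ x, f x = x - (2 * B w x / B w w) • w := by
  have hBw := apply_eq_mul_of_isometry_of_eq_add_smul hf hfw hv
  have hc : B w v ≠ 0 := fun hc ↦ hw (hnd w fun y ↦ by rw [hBw, hc, mul_zero])
  have hφw : φ w = -2 := by
    have := mul_two_add_eq_zero_of_isometry_of_eq_add_smul hB hf hfw hv
    linear_combination (mul_eq_zero.mp this).resolve_left hc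
  have hww : B w w = -2 * B w v := by rw [hBw, hφw]
  have hww0 : B w w ≠ 0 := by rw [hww]; exact mul_ne_zero (neg_ne_zero.mpr two_ne_zero) hc
  refine ⟨hww0, fun x ↦ ?_⟩
  have : 2 * B w x / B w w = -φ x := by
    rw [div_eq_iff hww0, hBw, hww]
    ring
  rw [hfw, this, neg_smul, sub_neg_eq_add]

end BilinForm

end LinearMap

theorem isometry_fixing_hyperplane_eq_id_or_reflection_general
    (V : Type*) [AddCommGroup V] [Module ℝ V]
    (B : LinearMap.BilinForm ℝ V)
    (hBsymm : ∀ x y : V, B x y = B y x)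
    (hBnd : ∀ x : V, (∀ y : V, B x y = 0) → x = 0)
    (f : V →ₗ[ℝ] V)
    (hf : ∀ x y : V, B (f x) (f y) = B x y)
    (φ : V →ₗ[ℝ] ℝ) (hφ : φ ≠ 0)
    (hfix : ∀ x : V, φ x = 0 → f x = x) :
    (∀ x : V, f x = x) ∨
      ∃ e : V, B e e ≠ 0 ∧ ∀ x : V, f x = x - (2 * B e x / B e e) • e := by
  obtain ⟨v, hv⟩ := LinearMap.surjective_of_ne_zero hφ 1
  have hfw := LinearMap.apply_eq_add_smul_of_fixes_ker hfix hv
  by_cases hw : f v - v = 0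
  · exact .inl fun x ↦ by rw [hfw, hw, smul_zero, add_zero]
  · exact .inr ⟨f v - v, LinearMap.BilinForm.eq_reflection_of_isometry_of_eq_add_smul
      ⟨hBsymm⟩ hBnd hf hfw hv hw⟩

/-- An isometry of a nondegenerate symmetric bilinear form on a
finite-dimensional real vector space which fixes pointwise the kernel of a
nonzero linear functional is either the identity or the reflection in some
anisotropic vector `e`. -/
theorem isometry_fixing_hyperplane_eq_id_or_reflection
    (V : Type*) [AddCommGroup V] [Module ℝ V] [FiniteDimensional ℝ V]
    (B : LinearMap.BilinForm ℝ V)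
    (hBsymm : ∀ x y : V, B x y = B y x)
    (hBnd : ∀ x : V, (∀ y : V, B x y = 0) → x = 0)
    (f : V →ₗ[ℝ] V)
    (hf : ∀ x y : V, B (f x) (f y) = B x y)
    (φ : V →ₗ[ℝ] ℝ) (hφ : φ ≠ 0)
    (hfix : ∀ x : V, φ x = 0 → f x = x) :
    (∀ x : V, f x = x) ∨
      ∃ e : V, B e e ≠ 0 ∧ ∀ x : V, f x = x - (2 * B e x / B e e) • e :=
  isometry_fixing_hyperplane_eq_id_or_reflection_general V B hBsymm hBnd f hf φ hφ hfix
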